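/- arXiv:1406.1754 — 6 statements merged into one kernel-verified Lean document; each statement's English description precedes it below -/
import Mathlib

section
/- Let h : Σ → Σ* be a morphism and h̄ : (Σ × A) → (Σ × A)* an annotation of h, meaning that dropping the second components of h̄(b,a) yields h(b) for every b ∈ Σ and a ∈ A. Then every eigenvalue of the incidence matrix of h is also an eigenvalue of the incidence matrix of h̄. -/
/-- The incidence matrix of a morphism `h`. Entry `(i,j)` counts occurrences of `i` in `h j`. -/
def incMat {S : Type*} [DecidableEq S] (h : S → List S) : Matrix S S ℂ :=
  Matrix.of fun i j => ((h j).count i : ℂ)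

open Matrix in
private lemma count_map_fst {S A : Type*} [Fintype A] [DecidableEq S] [DecidableEq A]
    (i : S) (l : List (S × A)) :
    ((l.map Prod.fst).count i : ℂ) = ∑ a : A, ((@List.count (S × A) instBEqOfDecidableEq (i, a) l) : ℂ) := by
  induction l with
  | nil => simp
  | cons x l ih =>
    obtain ⟨s, a'⟩ := x
    simp only [List.map_cons, List.count_cons, Nat.cast_add, ih, Nat.cast_ite, Nat.cast_one,
      Nat.cast_zero]
    rw [Finset.sum_add_distrib]
    congr 1
    simp only [beq_iff_eq, Prod.mk.injEq]
    have hbeq : (@BEq.beq (S × A) instBEqOfDecidableEq) = fun a b => decide (a = b) := rfl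
    by_cases hs : s = i
    · subst hs
      simp [hbeq, Prod.ext_iff]
    · simp [hbeq, Prod.ext_iff, hs]

open Matrix in
/-- Every eigenvalue of the incidence matrix of `h` is also an eigenvalue of the
incidence matrix of any annotation `hb` of `h`. -/
theorem stmt1 {S A : Type*} [Fintype S] [Fintype A] [Nonempty A]
    [DecidableEq S] [DecidableEq A]
    (h : S → List S) (hb : S × A → List (S × A))
    (hann : ∀ (b : S) (a : A), (hb (b, a)).map Prod.fst = h b)
    (μ : ℂ)
    (hμ : ∃ v : S → ℂ, v ≠ 0 ∧ (incMat h).mulVec v = μ • v) :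
    ∃ w : S × A → ℂ, w ≠ 0 ∧ (incMat hb).mulVec w = μ • w := by
  obtain ⟨v, hv0, hv⟩ := hμ
  set M : Matrix S S ℂ := incMat h
  set N : Matrix (S × A) (S × A) ℂ := incMat hb
  -- μ•1 - M is singular
  have hdetM : (μ • (1 : Matrix S S ℂ) - M).det = 0 := by
    rw [← Matrix.exists_mulVec_eq_zero_iff]
    refine ⟨v, hv0, ?_⟩
    rw [Matrix.sub_mulVec, Matrix.smul_mulVec, Matrix.one_mulVec, hv, sub_self]
  -- hence the transpose is singular: get a left eigenvector u of M
  have hdetMT : ((μ • (1 : Matrix S S ℂ) - M)ᵀ).det = 0 := by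
    rwa [Matrix.det_transpose]
  obtain ⟨u, hu0, hu⟩ := (Matrix.exists_mulVec_eq_zero_iff).2 hdetMT
  have huM : Mᵀ.mulVec u = μ • u := by
    have := hu
    rw [Matrix.transpose_sub, Matrix.transpose_smul, Matrix.transpose_one,
      Matrix.sub_mulVec, Matrix.smul_mulVec, Matrix.one_mulVec, sub_eq_zero] at this
    exact this.symm
  -- lift u to w := u ∘ fst, a left eigenvector of N
  set w : S × A → ℂ := fun p => u p.1 with hw
  have hwN : Nᵀ.mulVec w = μ • w := by
    funext p
    obtain ⟨j, b⟩ := p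
    have key : ∀ i : S, ∑ a : A, N (i, a) (j, b) = M i j := by
      intro i
      have h1 := count_map_fst i (hb (j, b))
      rw [hann j b] at h1
      simp only [N, M, incMat, Matrix.of_apply]
      exact h1.symm
    calc Nᵀ.mulVec w (j, b)
        = ∑ q : S × A, N q (j, b) * w q := by
          simp [Matrix.mulVec, Matrix.transpose_apply, dotProduct]
      _ = ∑ i : S, ∑ a : A, N (i, a) (j, b) * u i := by
          rw [Fintype.sum_prod_type]
      _ = ∑ i : S, (∑ a : A, N (i, a) (j, b)) * u i := by
          simp [Finset.sum_mul]
      _ = ∑ i : S, M i j * u i := by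
          refine Finset.sum_congr rfl fun i _ => by rw [key i]
      _ = Mᵀ.mulVec u j := by
          simp [Matrix.mulVec, Matrix.transpose_apply, dotProduct]
      _ = μ • w (j, b) := by rw [huM]; rfl
  have hw0 : w ≠ 0 := by
    intro hcon
    apply hu0
    funext j
    have := congrFun hcon (j, Classical.arbitrary A)
    simpa [hw] using this
  -- so μ•1 - Nᵀ is singular, hence μ•1 - N is singular
  have hdetNT : (μ • (1 : Matrix (S × A) (S × A) ℂ) - Nᵀ).det = 0 := by
    rw [← Matrix.exists_mulVec_eq_zero_iff]
    refine ⟨w, hw0, ?_⟩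
    rw [Matrix.sub_mulVec, Matrix.smul_mulVec, Matrix.one_mulVec, hwN, sub_self]
  have hdetN : (μ • (1 : Matrix (S × A) (S × A) ℂ) - N).det = 0 := by
    have : ((μ • (1 : Matrix (S × A) (S × A) ℂ) - N)ᵀ).det = 0 := by
      rwa [Matrix.transpose_sub, Matrix.transpose_smul, Matrix.transpose_one]
    rwa [Matrix.det_transpose] at this
  obtain ⟨w', hw'0, hw'⟩ := (Matrix.exists_mulVec_eq_zero_iff).2 hdetN
  refine ⟨w', hw'0, ?_⟩
  rw [Matrix.sub_mulVec, Matrix.smul_mulVec, Matrix.one_mulVec, sub_eq_zero] at hw'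
  exact hw'.symm
end

section
/- Let h : Σ → Σ* be a morphism and h̄ : (Σ × A) → (Σ × A)* an annotation of h. Then every eigenvalue of the incidence matrix of h̄ that has a non-negative (entrywise ≥ 0, nonzero) eigenvector is also an eigenvalue of the incidence matrix of h. -/
/-!
Summing a vector over the annotation component intertwines the two incidence matrices, since
each entry of the incidence matrix of `h` is the sum of the corresponding entries of that of
`h̄` over the annotations of the counted letter. Hence the fibre sums of an eigenvector of `h̄`
satisfy the eigen-equation of `h` with the same eigenvalue, and they do not all vanish because
the eigenvector is non-negative.
-/

/-- The incidence matrix (over ℝ) of a morphism `h`. -/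
def incMatR {S : Type*} [DecidableEq S] (h : S → List S) : Matrix S S ℝ :=
  Matrix.of fun i j => ((h j).count i : ℝ)

theorem List.sum_count_prodMk_eq_count_map_fst {S A : Type*} [Fintype A] [DecidableEq S]
    [DecidableEq (S × A)] (l : List (S × A)) (b : S) :
    ∑ a : A, l.count (b, a) = (l.map Prod.fst).count b := by
  induction l with
  | nil => simp
  | cons p l ih =>
    obtain ⟨b', a'⟩ := p
    simp only [List.count_cons, List.map_cons, Finset.sum_add_distrib, ih, beq_iff_eq,
      Prod.mk.injEq]
    by_cases hb : b' = b
    · subst hb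
      classical
      simp
    · simp [hb]

section Marginal

variable {S A : Type*} [Fintype A]

def marginalFst (v : S × A → ℝ) : S → ℝ := fun b => ∑ a, v (b, a)

theorem marginalFst_smul (r : ℝ) (v : S × A → ℝ) :
    marginalFst (r • v) = r • marginalFst v := by
  ext b
  simp only [marginalFst, Pi.smul_apply, smul_eq_mul, Finset.mul_sum]

theorem marginalFst_ne_zero {v : S × A → ℝ} (hv : v ≠ 0) (hnonneg : ∀ p, 0 ≤ v p) :
    marginalFst v ≠ 0 := by
  obtain ⟨⟨b, a⟩, hba⟩ := Function.ne_iff.mp hv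
  intro h0
  have hsum : ∑ a', v (b, a') = 0 := congrFun h0 b
  rw [Finset.sum_eq_zero_iff_of_nonneg fun a' _ => hnonneg _] at hsum
  exact hba (hsum a (Finset.mem_univ a))

theorem sum_incMatR_annotation [DecidableEq S] [DecidableEq A]
    {h : S → List S} {hb : S × A → List (S × A)}
    (hann : ∀ b a, (hb (b, a)).map Prod.fst = h b) (b' : S) (p : S × A) :
    ∑ a', incMatR hb (b', a') p = incMatR h b' p.1 := by
  simp only [incMatR, Matrix.of_apply]
  rw [← hann, ← List.sum_count_prodMk_eq_count_map_fst, Nat.cast_sum]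

theorem incMatR_mulVec_marginalFst [Fintype S] [DecidableEq S] [DecidableEq A]
    {h : S → List S} {hb : S × A → List (S × A)}
    (hann : ∀ b a, (hb (b, a)).map Prod.fst = h b) (v : S × A → ℝ) :
    (incMatR h).mulVec (marginalFst v) = marginalFst ((incMatR hb).mulVec v) := by
  ext b'
  simp only [Matrix.mulVec, dotProduct, marginalFst, Fintype.sum_prod_type]
  calc ∑ b, incMatR h b' b * ∑ a, v (b, a)
      = ∑ b, ∑ a, ∑ a', incMatR hb (b', a') (b, a) * v (b, a) := by
        simp only [Finset.mul_sum, ← Finset.sum_mul, sum_incMatR_annotation hann]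
    _ = ∑ a', ∑ b, ∑ a, incMatR hb (b', a') (b, a) * v (b, a) :=
        (Finset.sum_congr rfl fun b _ => Finset.sum_comm).trans Finset.sum_comm

end Marginal

/-- Every eigenvalue of the incidence matrix of an annotation `hb` of `h` that has a
non-negative (entrywise ≥ 0, nonzero) eigenvector is also an eigenvalue of the
incidence matrix of `h`. -/
theorem stmt2 {S A : Type*} [Fintype S] [Fintype A] [DecidableEq S] [DecidableEq A]
    (h : S → List S) (hb : S × A → List (S × A))
    (hann : ∀ (b : S) (a : A), (hb (b, a)).map Prod.fst = h b)
    (r : ℝ) (v : S × A → ℝ) (hv : v ≠ 0) (hnonneg : ∀ p, 0 ≤ v p)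
    (heig : (incMatR hb).mulVec v = r • v) :
    ∃ w : S → ℝ, w ≠ 0 ∧ (incMatR h).mulVec w = r • w := by
  refine ⟨marginalFst v, marginalFst_ne_zero hv hnonneg, ?_⟩
  rw [incMatR_mulVec_marginalFst hann, heig, marginalFst_smul]
end

section
/- Every non-negative real square matrix M has a real eigenvalue α ≥ 0 that is greater than or equal to the absolute value of every other (complex) eigenvalue of M, and which has an associated entrywise non-negative eigenvector. -/
/-!
For a positive matrix `A`, the Collatz–Wielandt number `r`, the largest `s` with `s • x ≤ A *ᵥ x`
for some non-negative `x ≠ 0`, is attained on the standard simplex, and any maximizer `x` is an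
eigenvector: otherwise `y = A *ᵥ x - r • x` is non-negative and nonzero, so `A *ᵥ y` is positive
and `(r + δ) • z ≤ A *ᵥ z` for `z = A *ᵥ x` and some `δ > 0`.

A non-negative `M` is the decreasing limit of the positive matrices `M + 1 / (k + 1)`; a limit point
of their eigenpairs is an eigenpair of `M`, and its eigenvalue still bounds the Collatz–Wielandt
set of `M`, which is contained in those of the perturbed matrices. Finally, for a complex eigenpair
`(μ, u)` the triangle inequality gives `‖μ‖ • |u| ≤ M *ᵥ |u|`, so `‖μ‖` lies in that set.
-/

open Filter Topology

variable {ι : Type*} [Fintype ι]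

lemma ne_zero_of_mem_stdSimplex {x : ι → ℝ} (hx : x ∈ stdSimplex ℝ ι) : x ≠ 0 := by
  rintro rfl
  simpa using hx.2

lemma inv_sum_smul_mem_stdSimplex {w : ι → ℝ} (hw : 0 ≤ w) (hw0 : w ≠ 0) :
    (∑ i, w i)⁻¹ • w ∈ stdSimplex ℝ ι := by
  have hsum : 0 < ∑ i, w i := by
    obtain ⟨j, hj⟩ : ∃ j, w j ≠ 0 := Function.ne_iff.1 hw0
    exact Finset.sum_pos' (fun i _ => hw i) ⟨j, Finset.mem_univ j, (hw j).lt_of_ne' hj⟩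
  refine ⟨fun i => mul_nonneg (inv_nonneg.2 hsum.le) (hw i), ?_⟩
  simp only [Pi.smul_apply, smul_eq_mul, ← Finset.mul_sum]
  exact inv_mul_cancel₀ hsum.ne'

lemma exists_pos_smul_le {z y : ι → ℝ} (hy : ∀ i, 0 < y i) : ∃ δ : ℝ, 0 < δ ∧ δ • z ≤ y := by
  have : ∀ᶠ δ in 𝓝 (0 : ℝ), ∀ i, δ * z i < y i := eventually_all.2 fun i =>
    (continuous_mul_const (z i)).continuousAt.eventually_lt continuousAt_const (by simpa using hy i)
  obtain ⟨δ, hδ, hδ0⟩ := ((this.filter_mono nhdsWithin_le_nhds).and self_mem_nhdsWithin).exists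
    (f := 𝓝[>] (0 : ℝ))
  exact ⟨δ, hδ0, fun i => (hδ i).le⟩

namespace Matrix

def collatzWielandtSet (A : Matrix ι ι ℝ) : Set ℝ :=
  {s | ∃ w : ι → ℝ, 0 ≤ w ∧ w ≠ 0 ∧ s • w ≤ A *ᵥ w}

lemma mulVec_nonneg {A : Matrix ι ι ℝ} (hA : ∀ i j, 0 ≤ A i j) {w : ι → ℝ} (hw : 0 ≤ w) :
    0 ≤ A *ᵥ w :=
  fun i => Finset.sum_nonneg fun j _ => mul_nonneg (hA i j) (hw j)

lemma mulVec_le_mulVec {A B : Matrix ι ι ℝ} (hAB : ∀ i j, A i j ≤ B i j) {w : ι → ℝ}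
    (hw : 0 ≤ w) : A *ᵥ w ≤ B *ᵥ w :=
  fun i => Finset.sum_le_sum fun j _ => mul_le_mul_of_nonneg_right (hAB i j) (hw j)

lemma mulVec_pos {A : Matrix ι ι ℝ} (hA : ∀ i j, 0 < A i j) {w : ι → ℝ} (hw : 0 ≤ w)
    (hw0 : w ≠ 0) (i : ι) : 0 < (A *ᵥ w) i := by
  obtain ⟨j, hj⟩ : ∃ j, w j ≠ 0 := Function.ne_iff.1 hw0
  calc 0 < A i j * w j := mul_pos (hA i j) ((hw j).lt_of_ne' hj)
    _ ≤ (A *ᵥ w) i :=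
      Finset.single_le_sum (fun k _ => mul_nonneg (hA i k).le (hw k)) (Finset.mem_univ j)

lemma collatzWielandtSet_mono {A B : Matrix ι ι ℝ} (hAB : ∀ i j, A i j ≤ B i j) :
    A.collatzWielandtSet ⊆ B.collatzWielandtSet :=
  fun _ ⟨w, hw, hw0, hsw⟩ => ⟨w, hw, hw0, hsw.trans (mulVec_le_mulVec hAB hw)⟩

lemma mem_collatzWielandtSet_of_mem_stdSimplex {A : Matrix ι ι ℝ} {s : ℝ} {x : ι → ℝ}
    (hx : x ∈ stdSimplex ℝ ι) (hsx : s • x ≤ A *ᵥ x) : s ∈ A.collatzWielandtSet :=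
  ⟨x, hx.1, ne_zero_of_mem_stdSimplex hx, hsx⟩

lemma zero_mem_collatzWielandtSet [Nonempty ι] {A : Matrix ι ι ℝ} (hA : ∀ i j, 0 ≤ A i j) :
    0 ∈ A.collatzWielandtSet :=
  have hx := (stdSimplex.barycenter : stdSimplex ℝ ι).2
  mem_collatzWielandtSet_of_mem_stdSimplex hx (by simpa using mulVec_nonneg hA hx.1)

lemma le_sum_of_smul_le_mulVec {A : Matrix ι ι ℝ} (hA : ∀ i j, 0 ≤ A i j) {s : ℝ}
    {x : ι → ℝ} (hx : x ∈ stdSimplex ℝ ι) (hsx : s • x ≤ A *ᵥ x) :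
    s ≤ ∑ i, ∑ j, A i j :=
  calc s = ∑ i, s * x i := by rw [← Finset.mul_sum, hx.2, mul_one]
    _ ≤ ∑ i, (A *ᵥ x) i := Finset.sum_le_sum fun i _ => hsx i
    _ ≤ ∑ i, ∑ j, A i j := Finset.sum_le_sum fun i _ => Finset.sum_le_sum fun j _ =>
        mul_le_of_le_one_right (hA i j) (mem_Icc_of_mem_stdSimplex hx j).2

lemma exists_isGreatest_collatzWielandtSet [Nonempty ι] {A : Matrix ι ι ℝ}
    (hA : ∀ i j, 0 ≤ A i j) :
    ∃ r, ∃ x ∈ stdSimplex ℝ ι, r • x ≤ A *ᵥ x ∧ r ∈ upperBounds A.collatzWielandtSet := by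
  set S := (Set.Icc 0 (∑ i, ∑ j, A i j) ×ˢ stdSimplex ℝ ι) ∩ {p | p.1 • p.2 ≤ A *ᵥ p.2}
  have hS : IsCompact S :=
    (isCompact_Icc.prod (isCompact_stdSimplex ℝ ι)).inter_right
      (isClosed_le (by fun_prop) (by fun_prop))
  obtain ⟨x₀, hx₀⟩ := (stdSimplex.barycenter : stdSimplex ℝ ι)
  have hS₀ : ((0 : ℝ), x₀) ∈ S :=
    ⟨⟨⟨le_rfl, Finset.sum_nonneg fun i _ => Finset.sum_nonneg fun j _ => hA i j⟩, hx₀⟩,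
      by simpa using mulVec_nonneg hA hx₀.1⟩
  obtain ⟨⟨r, x⟩, ⟨⟨⟨hr, -⟩, hx⟩, hrx⟩, hmax⟩ :=
    hS.exists_isMaxOn ⟨_, hS₀⟩ continuous_fst.continuousOn
  refine ⟨r, x, hx, hrx, ?_⟩
  rintro s ⟨w, hw, hw0, hsw⟩
  rcases le_total s 0 with hs | hs
  · exact hs.trans hr
  have hw' := inv_sum_smul_mem_stdSimplex hw hw0
  have hsw' : s • (∑ i, w i)⁻¹ • w ≤ A *ᵥ (∑ i, w i)⁻¹ • w := by
    rw [smul_comm, mulVec_smul]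
    exact smul_le_smul_of_nonneg_left hsw (inv_nonneg.2 (Finset.sum_nonneg fun i _ => hw i))
  exact hmax (show (s, _) ∈ S from ⟨⟨⟨hs, le_sum_of_smul_le_mulVec hA hw' hsw'⟩, hw'⟩, hsw'⟩)

lemma mulVec_eq_smul_of_pos {A : Matrix ι ι ℝ} (hA : ∀ i j, 0 < A i j) {r : ℝ} {x : ι → ℝ}
    (hx : 0 ≤ x) (hx0 : x ≠ 0) (hrx : r • x ≤ A *ᵥ x)
    (hr : r ∈ upperBounds A.collatzWielandtSet) : A *ᵥ x = r • x := by
  by_contra hne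
  set y := A *ᵥ x - r • x
  have hy : 0 ≤ y := sub_nonneg.2 hrx
  have hy0 : y ≠ 0 := sub_ne_zero.2 hne
  obtain ⟨δ, hδ, hδz⟩ := exists_pos_smul_le (z := A *ᵥ x) (mulVec_pos hA hy hy0)
  have hz : (r + δ) • (A *ᵥ x) ≤ A *ᵥ (A *ᵥ x) := by
    have : A *ᵥ (A *ᵥ x) = r • (A *ᵥ x) + A *ᵥ y := by
      rw [mulVec_sub, mulVec_smul, add_sub_cancel]
    rw [this, add_smul]
    exact add_le_add_right hδz _
  obtain ⟨j, -⟩ := Function.ne_iff.1 hx0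
  have hz0 : A *ᵥ x ≠ 0 := fun h => (mulVec_pos hA hx hx0 j).ne' (congrFun h j)
  linarith [hr ⟨_, mulVec_nonneg (fun i j => (hA i j).le) hx, hz0, hz⟩]

lemma exists_eigenvector_of_pos [Nonempty ι] {A : Matrix ι ι ℝ} (hA : ∀ i j, 0 < A i j) :
    ∃ r, ∃ x ∈ stdSimplex ℝ ι, A *ᵥ x = r • x ∧ r ∈ upperBounds A.collatzWielandtSet := by
  obtain ⟨r, x, hx, hrx, hr⟩ := exists_isGreatest_collatzWielandtSet fun i j => (hA i j).le
  exact ⟨r, x, hx, mulVec_eq_smul_of_pos hA hx.1 (ne_zero_of_mem_stdSimplex hx) hrx hr, hr⟩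

lemma exists_eigenvector_of_tendsto [Nonempty ι] {M : Matrix ι ι ℝ} {A : ℕ → Matrix ι ι ℝ}
    (hA : Tendsto A atTop (𝓝 M)) (hpos : ∀ k i j, 0 < A k i j)
    (hMA : ∀ k i j, M i j ≤ A k i j) (hA0 : ∀ k i j, A k i j ≤ A 0 i j) :
    ∃ r, ∃ x ∈ stdSimplex ℝ ι, M *ᵥ x = r • x ∧ r ∈ upperBounds M.collatzWielandtSet := by
  choose r x hx heig hr using fun k => exists_eigenvector_of_pos (hpos k)
  have hr_mem : ∀ k, r k ∈ (A k).collatzWielandtSet := fun k =>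
    mem_collatzWielandtSet_of_mem_stdSimplex (hx k) (heig k).ge
  have hbound : ∀ k, (r k, x k) ∈ Set.Icc 0 (r 0) ×ˢ stdSimplex ℝ ι := fun k =>
    ⟨⟨hr k (zero_mem_collatzWielandtSet fun i j => (hpos k i j).le),
      hr 0 (collatzWielandtSet_mono (hA0 k) (hr_mem k))⟩, hx k⟩
  obtain ⟨⟨r₀, x₀⟩, ⟨-, hx₀⟩, φ, hφ, hlim⟩ :=
    (isCompact_Icc.prod (isCompact_stdSimplex ℝ ι)).tendsto_subseq hbound
  have heig₀ : M *ᵥ x₀ = r₀ • x₀ :=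
    (isClosed_eq (f := fun p : Matrix ι ι ℝ × ℝ × (ι → ℝ) => p.1 *ᵥ p.2.2)
      (g := fun p => p.2.1 • p.2.2) (by fun_prop) (by fun_prop)).mem_of_tendsto
      ((hA.comp hφ.tendsto_atTop).prodMk_nhds hlim) (Eventually.of_forall fun k => heig (φ k))
  refine ⟨r₀, x₀, hx₀, heig₀, fun s hs => ge_of_tendsto' hlim.fst_nhds fun k => ?_⟩
  exact hr (φ k) (collatzWielandtSet_mono (hMA (φ k)) hs)

lemma exists_eigenvector_of_nonneg [Nonempty ι] {M : Matrix ι ι ℝ} (hM : ∀ i j, 0 ≤ M i j) :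
    ∃ r, ∃ x ∈ stdSimplex ℝ ι, M *ᵥ x = r • x ∧ r ∈ upperBounds M.collatzWielandtSet := by
  set ε : ℕ → ℝ := fun k => 1 / ((k : ℝ) + 1)
  have hε : ∀ k, 0 < ε k := fun k => by positivity
  have hε0 : ∀ k, ε k ≤ ε 0 := fun k => one_div_le_one_div_of_le (by positivity) (by simp)
  have hlim : Tendsto (fun k => M + of fun _ _ => ε k) atTop (𝓝 M) :=
    tendsto_pi_nhds.2 fun i => tendsto_pi_nhds.2 fun j => by
      simpa [ε] using (tendsto_const_nhds (x := M i j)).add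
        (tendsto_one_div_add_atTop_nhds_zero_nat (𝕜 := ℝ))
  exact exists_eigenvector_of_tendsto hlim
    (fun k i j => by simpa using add_pos_of_nonneg_of_pos (hM i j) (hε k))
    (fun k i j => by simpa using (hε k).le) (fun k i j => by simpa using hε0 k)

lemma norm_mem_collatzWielandtSet {M : Matrix ι ι ℝ} (hM : ∀ i j, 0 ≤ M i j) {μ : ℂ}
    {u : ι → ℂ} (hu : u ≠ 0) (h : M.map (↑) *ᵥ u = μ • u) :
    ‖μ‖ ∈ M.collatzWielandtSet := by
  refine ⟨fun i => ‖u i‖, fun i => norm_nonneg _, fun h0 => hu (funext fun i => ?_), fun i => ?_⟩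
  · simpa using congrFun h0 i
  calc ‖μ‖ * ‖u i‖ = ‖∑ j, (M i j : ℂ) * u j‖ := by
        rw [← norm_mul, ← smul_eq_mul, ← Pi.smul_apply, ← h]; rfl
    _ ≤ ∑ j, M i j * ‖u j‖ := by
        refine (norm_sum_le _ _).trans_eq (Finset.sum_congr rfl fun j _ => ?_)
        rw [norm_mul, Complex.norm_real, Real.norm_of_nonneg (hM i j)]

end Matrix

/-- Perron–Frobenius: every non-negative real square matrix has a real eigenvalue
`α ≥ 0` that dominates the absolute value of every complex eigenvalue, and which has
an entrywise non-negative (nonzero) eigenvector. -/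
theorem stmt4 {n : ℕ} (hn : 0 < n) (M : Matrix (Fin n) (Fin n) ℝ)
    (hM : ∀ i j, 0 ≤ M i j) :
    ∃ α : ℝ, 0 ≤ α ∧
      (∃ v : Fin n → ℝ, v ≠ 0 ∧ (∀ i, 0 ≤ v i) ∧ M.mulVec v = α • v) ∧
      ∀ μ : ℂ, (∃ u : Fin n → ℂ, u ≠ 0 ∧ (M.map (Complex.ofReal ·)).mulVec u = μ • u) →
        ‖μ‖ ≤ α := by
  have : Nonempty (Fin n) := Fin.pos_iff_nonempty.1 hn
  obtain ⟨α, v, hv, heig, hα⟩ := Matrix.exists_eigenvector_of_nonneg hM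
  refine ⟨α, hα (Matrix.zero_mem_collatzWielandtSet hM),
    ⟨v, ne_zero_of_mem_stdSimplex hv, hv.1, heig⟩, ?_⟩
  rintro μ ⟨u, hu, hμ⟩
  exact hα (Matrix.norm_mem_collatzWielandtSet hM hu hμ)
end

section
/- Given any finite state transducer M with state set Q and any morphism h : Σ → Σ*, there exist natural numbers p ≥ 1 and n ≥ 0 such that for every word w ∈ Σ* and every i ≥ n, the state-transition function induced by h^i(w) equals the state-transition function induced by h^{i+p}(w); that is, τ_{h^i(w)} = τ_{h^{i+p}(w)}. -/
/-- The word map of a morphism `h : S → S*`. -/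
def wordMap {S : Type*} (h : S → List S) : List S → List S :=
  fun l => l.flatMap h

/-- `tau δ w : Q → Q` is the state-transition function induced by the word `w`. -/
def tau {S Q : Type*} (δ : Q → S → Q) (w : List S) : Q → Q :=
  fun q => w.foldl δ q

lemma wordMap_nil {S : Type*} (h : S → List S) (i : ℕ) :
    (wordMap h)^[i] ([] : List S) = [] := by
  induction i with
  | zero => rfl
  | succ i ih => rw [Function.iterate_succ_apply]; simpa [wordMap] using ih

lemma wordMap_append {S : Type*} (h : S → List S) (i : ℕ) (u v : List S) :
    (wordMap h)^[i] (u ++ v) = (wordMap h)^[i] u ++ (wordMap h)^[i] v := by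
  induction i generalizing u v with
  | zero => simp
  | succ i ih =>
    simp only [Function.iterate_succ_apply]
    rw [show wordMap h (u ++ v) = wordMap h u ++ wordMap h v from List.flatMap_append .., ih]

lemma tau_fold {S Q : Type*} (δ : Q → S → Q) (h : S → List S) (i : ℕ) (w : List S) (q : Q) :
    tau δ ((wordMap h)^[i] w) q = w.foldl (fun q a => tau δ ((wordMap h)^[i] [a]) q) q := by
  induction w generalizing q with
  | nil => simp [tau, wordMap_nil]
  | cons a w ih =>
    have : (a :: w) = [a] ++ w := rfl
    rw [this, wordMap_append]
    simp only [tau, List.foldl_append, List.foldl_cons, List.foldl_nil]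
    exact ih _

/-- For any finite-state transducer (with transition function `δ` over finite state set
`Q`) and any morphism `h` over a finite alphabet `S`, there are `p ≥ 1` and `n` such
that `τ_{h^i(w)} = τ_{h^{i+p}(w)}` for all words `w` and all `i ≥ n`. -/
theorem stmt5 {S Q : Type*} [Fintype S] [Fintype Q] (δ : Q → S → Q) (h : S → List S) :
    ∃ p : ℕ, 1 ≤ p ∧ ∃ n : ℕ, ∀ (w : List S) (i : ℕ), n ≤ i →
      tau δ ((wordMap h)^[i] w) = tau δ ((wordMap h)^[i + p] w) := by
  classical
  set f : ℕ → S → Q → Q := fun i a => tau δ ((wordMap h)^[i] [a]) with hf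
  set Φ : (S → Q → Q) → (S → Q → Q) :=
    fun g a q => (h a).foldl (fun q b => g b q) q with hΦ
  have hstep : ∀ i, f (i + 1) = Φ (f i) := by
    intro i
    funext a q
    have h1 : (wordMap h)^[i+1] [a] = (wordMap h)^[i] (h a) := by
      rw [Function.iterate_succ_apply]
      congr 1
      simp [wordMap]
    simp only [hf, h1]
    exact tau_fold δ h i (h a) q
  have hiter : ∀ i, f i = Φ^[i] (f 0) := by
    intro i
    induction i with
    | zero => rfl
    | succ i ih => rw [hstep i, ih, Function.iterate_succ_apply']
  obtain ⟨m, n, hmn, heq⟩ :=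
    Finite.exists_ne_map_eq_of_infinite (fun i : ℕ => Φ^[i] (f 0))
  wlog hlt : n < m generalizing m n
  · exact this n m hmn.symm heq.symm ((hmn.lt_or_gt).resolve_right hlt)
  refine ⟨m - n, by omega, n, ?_⟩
  have hperiod : ∀ i, n ≤ i → f i = f (i + (m - n)) := by
    intro i hi
    have e1 : f i = Φ^[i - n] (Φ^[n] (f 0)) := by
      rw [hiter, ← Function.iterate_add_apply]; congr 1; omega
    have e2 : f (i + (m - n)) = Φ^[i - n] (Φ^[m] (f 0)) := by
      rw [hiter, ← Function.iterate_add_apply]; congr 1; omega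
    rw [e1, e2, heq]
  intro w i hi
  funext q
  have hfa : ∀ a q, tau δ ((wordMap h)^[i] [a]) q
      = tau δ ((wordMap h)^[i + (m - n)] [a]) q :=
    fun a q => congrFun (congrFun (hperiod i hi) a) q
  rw [tau_fold, tau_fold]
  simp only [hfa]
end

section
/- With Θ(w) = (τ_w, τ_{h(w)}, …, τ_{h^{n+p-1}(w)}) defined using the eventual period p and preperiod n of the sequences (τ_{h^i(w)})_i: if Θ(w) = Θ(y) for words w, y ∈ Σ*, then Θ(h(w)) = Θ(h(y)). -/
/-- `Theta δ h N w = (τ_w, τ_{h(w)}, …, τ_{h^{N-1}(w)})`. -/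
def Theta {S Q : Type*} (δ : Q → S → Q) (h : S → List S) (N : ℕ) (w : List S) :
    Fin N → Q → Q :=
  fun k => tau δ ((wordMap h)^[k] w)

/-- If `Θ(w) = Θ(y)` then `Θ(h(w)) = Θ(h(y))`, where `Θ` has length `n + p` and
`p ≥ 1`, `n` are the eventual period and preperiod of the sequences `(τ_{h^i(w)})_i`. -/
theorem stmt6 {S Q : Type*} (δ : Q → S → Q) (h : S → List S) (p n : ℕ) (hp : 1 ≤ p)
    (hper : ∀ (w : List S) (i : ℕ), n ≤ i →
      tau δ ((wordMap h)^[i] w) = tau δ ((wordMap h)^[i + p] w))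
    (w y : List S) (hΘ : Theta δ h (n + p) w = Theta δ h (n + p) y) :
    Theta δ h (n + p) (wordMap h w) = Theta δ h (n + p) (wordMap h y) := by
  have key : ∀ i < n + p, tau δ ((wordMap h)^[i] w) = tau δ ((wordMap h)^[i] y) := by
    intro i hi
    exact congrFun hΘ ⟨i, hi⟩
  funext k
  simp only [Theta, ← Function.iterate_succ_apply]
  rw [show (k:ℕ).succ = (k:ℕ) + 1 from rfl]
  rcases lt_or_ge (k.1 + 1) (n + p) with hk | hk
  · exact key _ hk
  · have hk' : (k : ℕ) + 1 = n + p := le_antisymm (Nat.succ_le_of_lt k.2) hk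
    rw [hk']
    have hn : n < n + p := Nat.lt_add_of_pos_right hp
    rw [← hper w n le_rfl, ← hper y n le_rfl]
    exact key n hn
end

section
/- In the annotated-morphism construction: for every letter σ ∈ Σ, every word w ∈ Σ*, and every natural number m, if h^m(σ) = s_1 s_2 ⋯ s_ℓ, then h̄^m((σ, Θ(w))) = (s_1, Θ(h^m(w))) (s_2, Θ(h^m(w)·s_1)) ⋯ (s_ℓ, Θ(h^m(w)·s_1⋯s_{ℓ-1})). -/
/-- Annotate a word `u` in context `w`. -/
def ann {S Q : Type*} (δ : Q → S → Q) (h : S → List S) (N : ℕ) :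
    List S → List S → List (S × (Fin N → Q → Q))
  | _, [] => []
  | w, a :: u => (a, Theta δ h N w) :: ann δ h N (w ++ [a]) u

lemma ann_eq_ofFn {S Q : Type*} (δ : Q → S → Q) (h : S → List S) (N : ℕ) :
    ∀ (u w : List S), ann δ h N w u =
      List.ofFn fun i : Fin u.length => (u.get i, Theta δ h N (w ++ u.take i)) := by
  intro u
  induction u with
  | nil => intro w; simp [ann]
  | cons a u ih =>
    intro w
    rw [List.ofFn_succ, ann]
    congr 1
    · simp
    · rw [ih (w ++ [a])]
      congr 1
      funext i
      simp [List.append_assoc]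

lemma ann_append {S Q : Type*} (δ : Q → S → Q) (h : S → List S) (N : ℕ) :
    ∀ (u v w : List S), ann δ h N w (u ++ v) = ann δ h N w u ++ ann δ h N (w ++ u) v := by
  intro u
  induction u with
  | nil => simp [ann]
  | cons a u ih => intro v w; simp [ann, ih, List.append_assoc]

lemma flatMap_ann {S Q : Type*} (δ : Q → S → Q) (h : S → List S) (N : ℕ)
    (hb : S × (Fin N → Q → Q) → List (S × (Fin N → Q → Q)))
    (hdef : ∀ (σ : S) (w : List S),
      hb (σ, Theta δ h N w) =
        List.ofFn fun i : Fin (h σ).length =>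
          ((h σ).get i, Theta δ h N (wordMap h w ++ (h σ).take i))) :
    ∀ (u w : List S),
      (ann δ h N w u).flatMap hb = ann δ h N (wordMap h w) (wordMap h u) := by
  intro u
  induction u with
  | nil => intro w; simp [ann, wordMap]
  | cons a u ih =>
    intro w
    have hw : wordMap h (w ++ [a]) = wordMap h w ++ h a := by simp [wordMap]
    have hc : wordMap h (a :: u) = h a ++ wordMap h u := by simp [wordMap]
    rw [ann, List.flatMap_cons, hdef a w, ih (w ++ [a]), hw, hc, ann_append]
    congr 1
    exact (ann_eq_ofFn δ h N (h a) (wordMap h w)).symm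

/-- In the annotated-morphism construction: if `h^m(σ) = s_1 ⋯ s_ℓ`, then
`h̄^m((σ, Θ(w))) = (s_1, Θ(h^m(w))) (s_2, Θ(h^m(w)·s_1)) ⋯ (s_ℓ, Θ(h^m(w)·s_1⋯s_{ℓ-1}))`. -/
theorem stmt12 {S Q : Type*} (δ : Q → S → Q) (h : S → List S) (N : ℕ)
    (hb : S × (Fin N → Q → Q) → List (S × (Fin N → Q → Q)))
    (hdef : ∀ (σ : S) (w : List S),
      hb (σ, Theta δ h N w) =
        List.ofFn fun i : Fin (h σ).length =>
          ((h σ).get i, Theta δ h N (wordMap h w ++ (h σ).take i))) :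
    ∀ (σ : S) (w : List S) (m : ℕ),
      (fun l => l.flatMap hb)^[m] [(σ, Theta δ h N w)] =
        List.ofFn fun i : Fin ((wordMap h)^[m] [σ]).length =>
          (((wordMap h)^[m] [σ]).get i,
            Theta δ h N ((wordMap h)^[m] w ++ ((wordMap h)^[m] [σ]).take i)) := by
  intro σ w m
  have key : ∀ (m : ℕ) (u w : List S),
      (fun l => l.flatMap hb)^[m] (ann δ h N w u) =
        ann δ h N ((wordMap h)^[m] w) ((wordMap h)^[m] u) := by
    intro m
    induction m with
    | zero => intro u w; simp
    | succ m ihm =>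
      intro u w
      rw [Function.iterate_succ_apply, Function.iterate_succ_apply,
        Function.iterate_succ_apply]
      simpa using ihm (wordMap h u) (wordMap h w) ▸
        congrArg ((fun l => l.flatMap hb)^[m]) (flatMap_ann δ h N hb hdef u w)
  have h1 : [(σ, Theta δ h N w)] = ann δ h N w [σ] := by simp [ann]
  rw [h1, key m [σ] w, ann_eq_ofFn]
end
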